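/- (Theorem 1, strengthened cost-decrease inequality) Under the hypotheses of Theorem 1 (Assumptions 1 and 2, P > 0, parameters δ, γ^i, μ with β > 0 and β·(L^0(x,Kx)+F^0(f(x,Kx))−F^0(x)) ≤ −(1−β)P on 𝕏∖B_δ; x_k ∈ 𝕏∖B_δ; α := α_b(x_k); U_* a feasible multi-horizon input minimizing α⊤𝐉(x_k,·) with primary final state x_{k,f} ∈ 𝕏∖B_δ; x_{k+1} := f(x_k, u*_k); U_s(x_{k+1}) the shifted candidate built with K and û), one has α⊤𝐉(x_{k+1}, U_s(x_{k+1})) − α⊤𝐉(x_k, U_*) ≤ − Σ_{i=0}^m α^i · L^i(x_k, u*_k), where u*_k is the first input of U_*. -/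

import Mathlib

noncomputable section

/-- A class-K function: continuous, strictly increasing on `[0,∞)`, vanishing at `0`. -/
def ClassK (σ : ℝ → ℝ) : Prop :=
  ContinuousOn σ (Set.Ici 0) ∧ StrictMonoOn σ (Set.Ici 0) ∧ σ 0 = 0

/-- Application of a matrix `K ∈ ℝ^{n_u × n_x}` to a state vector. -/
def matVec {nu nx : ℕ} (K : Matrix (Fin nu) (Fin nx) ℝ) (x : EuclideanSpace ℝ (Fin nx)) :
    EuclideanSpace ℝ (Fin nu) :=
  WithLp.toLp 2 (fun j => ∑ i, K j i * x i)

/-- The state trajectory of `x_{j+1} = f(x_j, u_j)` from `x` under input sequence `u`. -/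
def traj {E U : Type*} (f : E → U → E) (x : E) (u : ℕ → U) : ℕ → E
  | 0 => x
  | j + 1 => f (traj f x u j) (u j)

/-- Horizon-`N` cost `Jⁱ(x,(v_j)) = Σ_{j<N} L(x_j,v_j) + F(x_N)` of an input sequence. -/
def Jcost {E U : Type*} (f : E → U → E) (L : E → U → ℝ) (F : E → ℝ) (N : ℕ)
    (x : E) (v : ℕ → U) : ℝ :=
  (∑ j ∈ Finset.range N, L (traj f x v j) (v j)) + F (traj f x v N)

/-- Weighted multi-horizon cost `α⊤𝐉(x,U)`: component `0` is `J⁰(x,U⁰)`, component `i ≥ 1`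
is the average `(1/(N−1)) Σ_{p=0}^{N−2} Jⁱ(x,U_pⁱ)`.  `Up` is the primary horizon, and
`Ua i p` is the sub-horizon `U_pⁱ` toward alternative destination `i+1`. -/
def wcost {E U : Type*} {m : ℕ} (f : E → U → E) (L : Fin (m + 1) → E → U → ℝ)
    (F : Fin (m + 1) → E → ℝ) (N : ℕ) (α : Fin (m + 1) → ℝ)
    (x : E) (Up : ℕ → U) (Ua : Fin m → ℕ → ℕ → U) : ℝ :=
  α 0 * Jcost f (L 0) (F 0) N x Up +
    ∑ i : Fin m, α i.succ *
      (((N : ℝ) - 1)⁻¹ *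
        ∑ p ∈ Finset.range (N - 1), Jcost f (L i.succ) (F i.succ) N x (Ua i p))

/-- Feasibility of a multi-horizon input at `x`: all inputs lie in `𝕌`, all trajectory
states lie in `𝕏`, and each sub-horizon `U_pⁱ` shares its first `p+1` inputs with `U⁰`. -/
def Feas {E U : Type*} {m : ℕ} (f : E → U → E) (Xs : Set E) (Us : Set U) (N : ℕ)
    (x : E) (Up : ℕ → U) (Ua : Fin m → ℕ → ℕ → U) : Prop :=
  (∀ j < N, Up j ∈ Us) ∧ (∀ j ≤ N, traj f x Up j ∈ Xs) ∧
  (∀ i : Fin m, ∀ p < N - 1,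
    (∀ j < N, Ua i p j ∈ Us) ∧ (∀ j ≤ N, traj f x (Ua i p) j ∈ Xs)) ∧
  (∀ i : Fin m, ∀ p < N - 1, ∀ j ≤ p, Ua i p j = Up j)

/-- `U_*` is a feasible multi-horizon input minimizing `α⊤𝐉(x,·)` over feasible inputs. -/
def IsMinimizer {E U : Type*} {m : ℕ} (f : E → U → E) (L : Fin (m + 1) → E → U → ℝ)
    (F : Fin (m + 1) → E → ℝ) (Xs : Set E) (Us : Set U) (N : ℕ) (α : Fin (m + 1) → ℝ)
    (x : E) (Up : ℕ → U) (Ua : Fin m → ℕ → ℕ → U) : Prop :=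
  Feas f Xs Us N x Up Ua ∧
    ∀ Vp Va, Feas f Xs Us N x Vp Va →
      wcost f L F N α x Up Ua ≤ wcost f L F N α x Vp Va

/-- Shift of a horizon: drop the first input and append `last` at the end. -/
def shiftP {U : Type*} (N : ℕ) (Up : ℕ → U) (last : U) : ℕ → U :=
  fun j => if j < N - 1 then Up (j + 1) else last

/-- Shift of all alternative sub-horizons: drop their first input and append `uhat`. -/
def shiftA {U : Type*} {m : ℕ} (N : ℕ) (Ua : Fin m → ℕ → ℕ → U) (uhat : U) :
    Fin m → ℕ → ℕ → U :=
  fun i p j => if j < N - 1 then Ua i p (j + 1) else uhat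

/-- The baseline weight vector `α_b(x)`: `α_b⁰(x) = 1 − Σ_i γ^i‖x‖/max(μ,‖x−pⁱ‖)` and
`α_bⁱ(x) = γ^i‖x‖/max(μ,‖x−pⁱ‖)` for `i = 1,…,m`. -/
def baseWeight {nx m : ℕ} (γ : Fin m → ℝ) (μ : ℝ)
    (p : Fin (m + 1) → EuclideanSpace ℝ (Fin nx)) (x : EuclideanSpace ℝ (Fin nx)) :
    Fin (m + 1) → ℝ :=
  Fin.cons (1 - ∑ i : Fin m, γ i * ‖x‖ / max μ ‖x - p i.succ‖)
    (fun i => γ i * ‖x‖ / max μ ‖x - p i.succ‖)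

/-!
Shifting a horizon by one step removes its first stage cost `Lⁱ(x_k, u*_k)` and adds the
one-step decrease at its terminal state. For the primary horizon, closed with `K`, that decrease
`E₀` is negative; for every alternative sub-horizon, closed with `û`, it is at most `P`. Since the
weights are nonnegative and sum to one, the cost changes by at most
`−Σ αⁱ Lⁱ(x_k, u*_k) + α⁰ E₀ + (1 − α⁰) P`, and `α⁰ ≥ β` together with
`β E₀ ≤ −(1 − β) P` makes the last two terms nonpositive.
-/

section Shift

variable {E U : Type*} (f : E → U → E)

theorem traj_succ_of_shift (x : E) (u v : ℕ → U) (n : ℕ) (hv : ∀ k < n, v k = u (k + 1)) :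
    traj f (f x (u 0)) v n = traj f x u (n + 1) := by
  induction n with
  | zero => rfl
  | succ j ih =>
    show f (traj f (f x (u 0)) v j) (v j) = f (traj f x u (j + 1)) (u (j + 1))
    rw [ih fun k hk => hv k (by omega), hv j (by omega)]

theorem traj_shiftP (N : ℕ) (x : E) (u : ℕ → U) (last : U) {j : ℕ} (hj : j < N) :
    traj f (f x (u 0)) (shiftP N u last) j = traj f x u (j + 1) :=
  traj_succ_of_shift f x u _ j fun k hk => if_pos (by omega)

theorem traj_shiftP_self (N : ℕ) (hN : 0 < N) (x : E) (u : ℕ → U) (last : U) :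
    traj f (f x (u 0)) (shiftP N u last) N = f (traj f x u N) last := by
  obtain ⟨M, rfl⟩ : ∃ M, N = M + 1 := ⟨N - 1, by omega⟩
  show f (traj f (f x (u 0)) (shiftP (M + 1) u last) M) (shiftP (M + 1) u last M) = _
  rw [traj_shiftP f _ x u last (Nat.lt_succ_self M)]
  simp [shiftP]

theorem Jcost_shiftP (L : E → U → ℝ) (F : E → ℝ) (N : ℕ) (hN : 0 < N) (x : E) (u : ℕ → U)
    (last : U) :
    Jcost f L F N (f x (u 0)) (shiftP N u last) =
      Jcost f L F N x u - L x (u 0) +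
        (L (traj f x u N) last + F (f (traj f x u N) last) - F (traj f x u N)) := by
  obtain ⟨M, rfl⟩ : ∃ M, N = M + 1 := ⟨N - 1, by omega⟩
  have hstage : ∀ j ∈ Finset.range M,
      L (traj f (f x (u 0)) (shiftP (M + 1) u last) j) (shiftP (M + 1) u last j) =
        L (traj f x u (j + 1)) (u (j + 1)) := by
    intro j hj
    rw [Finset.mem_range] at hj
    rw [traj_shiftP f _ x u last (by omega)]
    simp [shiftP, hj]
  unfold Jcost
  rw [Finset.sum_range_succ, Finset.sum_congr rfl hstage, Finset.sum_range_succ',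
    traj_shiftP f _ x u last (Nat.lt_succ_self M), traj_shiftP_self f (M + 1) M.succ_pos]
  simp only [shiftP, Nat.add_sub_cancel, lt_irrefl, if_false]
  rw [show traj f x u 0 = x from rfl]
  ring

end Shift

theorem inv_mul_sum_le_inv_mul_sum_add {ι : Type*} (s : Finset ι) (hs : s.Nonempty)
    (g h : ι → ℝ) (d : ℝ) (hgh : ∀ p ∈ s, g p ≤ h p + d) :
    (s.card : ℝ)⁻¹ * ∑ p ∈ s, g p ≤ (s.card : ℝ)⁻¹ * ∑ p ∈ s, h p + d := by
  have hcard : (0 : ℝ) < s.card := by exact_mod_cast hs.card_pos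
  calc (s.card : ℝ)⁻¹ * ∑ p ∈ s, g p ≤ (s.card : ℝ)⁻¹ * ∑ p ∈ s, (h p + d) := by
        gcongr with p hp
        exact hgh p hp
    _ = (s.card : ℝ)⁻¹ * ∑ p ∈ s, h p + d := by
        rw [Finset.sum_add_distrib, Finset.sum_const, nsmul_eq_mul]
        field_simp

theorem wcost_shift_le {E U : Type*} {m : ℕ} (f : E → U → E) (L : Fin (m + 1) → E → U → ℝ)
    (F : Fin (m + 1) → E → ℝ) (Xs : Set E) (Us : Set U) (N : ℕ) (hN : 2 ≤ N)
    (α : Fin (m + 1) → ℝ) (hα : ∀ i : Fin m, 0 ≤ α i.succ) (x : E) (Up : ℕ → U)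
    (Ua : Fin m → ℕ → ℕ → U) (hfeas : Feas f Xs Us N x Up Ua) (last uhat : U) (P : ℝ)
    (hP : ∀ i, ∀ y ∈ Xs, L i y uhat + F i (f y uhat) - F i y ≤ P) :
    wcost f L F N α (f x (Up 0)) (shiftP N Up last) (shiftA N Ua uhat) ≤
      wcost f L F N α x Up Ua - ∑ i, α i * L i x (Up 0) +
        α 0 * (L 0 (traj f x Up N) last + F 0 (f (traj f x Up N) last) - F 0 (traj f x Up N)) +
        (∑ i : Fin m, α i.succ) * P := by
  have hN0 : 0 < N := by omega
  have hcount : (N : ℝ) - 1 = ((Finset.range (N - 1)).card : ℝ) := by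
    rw [Finset.card_range, Nat.cast_sub (by omega), Nat.cast_one]
  have halt : ∀ i : Fin m,
      ((N : ℝ) - 1)⁻¹ * ∑ p ∈ Finset.range (N - 1),
          Jcost f (L i.succ) (F i.succ) N (f x (Up 0)) (shiftA N Ua uhat i p) ≤
        ((N : ℝ) - 1)⁻¹ * ∑ p ∈ Finset.range (N - 1),
          Jcost f (L i.succ) (F i.succ) N x (Ua i p) + (P - L i.succ x (Up 0)) := by
    intro i
    rw [hcount]
    refine inv_mul_sum_le_inv_mul_sum_add _ (Finset.nonempty_range_iff.mpr (by omega)) _ _ _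
      fun p hp => ?_
    have hp' := Finset.mem_range.mp hp
    have hshift := Jcost_shiftP f (L i.succ) (F i.succ) N hN0 x (Ua i p) uhat
    rw [hfeas.2.2.2 i p hp' 0 (Nat.zero_le p)] at hshift
    have hterm := hP i.succ _ ((hfeas.2.2.1 i p hp').2 N le_rfl)
    change Jcost f (L i.succ) (F i.succ) N (f x (Up 0)) (shiftP N (Ua i p) uhat) ≤ _
    linarith
  have hsum := Finset.sum_le_sum fun i (_ : i ∈ Finset.univ) =>
    mul_le_mul_of_nonneg_left (halt i) (hα i)
  simp only [mul_add, mul_sub, Finset.sum_add_distrib, Finset.sum_sub_distrib,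
    ← Finset.sum_mul] at hsum
  unfold wcost
  rw [Jcost_shiftP f (L 0) (F 0) N hN0 x Up last, Fin.sum_univ_succ]
  linarith

theorem baseWeight_succ_nonneg {nx m : ℕ} {γ : Fin m → ℝ} (hγ : ∀ i, 0 ≤ γ i) (μ : ℝ)
    (p : Fin (m + 1) → EuclideanSpace ℝ (Fin nx)) (x : EuclideanSpace ℝ (Fin nx))
    (i : Fin m) : 0 ≤ baseWeight γ μ p x i.succ := by
  simp only [baseWeight, Fin.cons_succ]
  exact div_nonneg (mul_nonneg (hγ i) (norm_nonneg x))
    (le_max_of_le_right (norm_nonneg _))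

theorem sum_baseWeight_succ {nx m : ℕ} (γ : Fin m → ℝ) (μ : ℝ)
    (p : Fin (m + 1) → EuclideanSpace ℝ (Fin nx)) (x : EuclideanSpace ℝ (Fin nx)) :
    ∑ i : Fin m, baseWeight γ μ p x i.succ = 1 - baseWeight γ μ p x 0 := by
  simp [baseWeight]

theorem stmt_7_general {nx nu m : ℕ}
    (f : EuclideanSpace ℝ (Fin nx) → EuclideanSpace ℝ (Fin nu) → EuclideanSpace ℝ (Fin nx))
    (Xs : Set (EuclideanSpace ℝ (Fin nx)))
    (Us : Set (EuclideanSpace ℝ (Fin nu)))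
    (p : Fin (m + 1) → EuclideanSpace ℝ (Fin nx))
    (L : Fin (m + 1) → EuclideanSpace ℝ (Fin nx) → EuclideanSpace ℝ (Fin nu) → ℝ)
    (F : Fin (m + 1) → EuclideanSpace ℝ (Fin nx) → ℝ)
    -- P = min-max constant, attained at û, with P > 0
    (P : ℝ) (uhat : EuclideanSpace ℝ (Fin nu))
    (huhat : uhat ∈ Us ∧ IsGreatest
        ((fun q : Fin (m + 1) × EuclideanSpace ℝ (Fin nx) =>
            L q.1 q.2 uhat + F q.1 (f q.2 uhat) - F q.1 q.2) ''
          ((Set.univ : Set (Fin (m + 1))) ×ˢ Xs)) P)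
    (hPpos : 0 < P)
    -- parameters δ, γ, μ and the matrix K satisfying Assumption 2 for δ
    (δ : ℝ) (γ : Fin m → ℝ) (hγ : ∀ i, 0 < γ i) (μ : ℝ)
    (K : Matrix (Fin nu) (Fin nx) ℝ)
    (hK : ∀ x ∈ Xs \ Metric.ball 0 δ,
      L 0 x (matVec K x) + F 0 (f x (matVec K x)) - F 0 x < 0)
    -- β = min of the primary baseline weight over 𝕏∖B_δ, β > 0, and the key inequality
    (β : ℝ)
    (hβ : IsLeast ((fun x => baseWeight γ μ p x 0) '' (Xs \ Metric.ball 0 δ)) β)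
    (hkey : ∀ x ∈ Xs \ Metric.ball 0 δ,
      β * (L 0 x (matVec K x) + F 0 (f x (matVec K x)) - F 0 x) ≤ -(1 - β) * P)
    -- horizon, current state, and the optimizer U_*
    (N : ℕ) (hN : 2 ≤ N)
    (xk : EuclideanSpace ℝ (Fin nx)) (hxk : xk ∈ Xs \ Metric.ball 0 δ)
    (Up : ℕ → EuclideanSpace ℝ (Fin nu))
    (Ua : Fin m → ℕ → ℕ → EuclideanSpace ℝ (Fin nu))
    (hopt : IsMinimizer f L F Xs Us N (baseWeight γ μ p xk) xk Up Ua)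
    (hxkf : traj f xk Up N ∈ Xs \ Metric.ball 0 δ) :
    wcost f L F N (baseWeight γ μ p xk) (f xk (Up 0))
        (shiftP N Up (matVec K (traj f xk Up N))) (shiftA N Ua uhat)
      - wcost f L F N (baseWeight γ μ p xk) xk Up Ua
      ≤ -∑ i : Fin (m + 1), baseWeight γ μ p xk i * L i xk (Up 0) := by
  set α := baseWeight γ μ p xk
  set xf := traj f xk Up N
  have hβα : β ≤ α 0 := hβ.2 ⟨xk, hxk, rfl⟩
  set E0 := L 0 xf (matVec K xf) + F 0 (f xf (matVec K xf)) - F 0 xf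
  have hE0 : E0 < 0 := hK xf hxkf
  -- `α 0 ≥ β` moves weight from `P` onto `E0 < 0`, so the sum is at most `β E0 + (1 - β) P`.
  have hbalance : α 0 * E0 + (1 - α 0) * P ≤ 0 := by
    have hmove := mul_nonpos_of_nonneg_of_nonpos (sub_nonneg.2 hβα) (by linarith : E0 - P ≤ 0)
    linarith [hkey xf hxkf]
  have hshift := wcost_shift_le f L F Xs Us N hN α
    (baseWeight_succ_nonneg (fun i => (hγ i).le) μ p xk) xk Up Ua hopt.1 (matVec K xf) uhat P
    fun i y hy => huhat.2.2 ⟨(i, y), ⟨trivial, hy⟩, rfl⟩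
  rw [sum_baseWeight_succ] at hshift
  linarith

/-- Theorem 1, strengthened cost-decrease inequality: under the hypotheses
of Theorem 1 (Assumptions 1 and 2, `P > 0`, parameters `δ, γ, μ` with `β > 0` and
`β·(L⁰(x,Kx)+F⁰(f(x,Kx))−F⁰(x)) ≤ −(1−β)P` on `𝕏∖B_δ`; `x_k ∈ 𝕏∖B_δ`; `α := α_b(x_k)`;
`U_*` a feasible minimizer of `α⊤𝐉(x_k,·)` with primary final state in `𝕏∖B_δ`;
`x_{k+1} := f(x_k, u*_k)`; `U_s(x_{k+1})` the shifted candidate built with `K` and `û`),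
one has `α⊤𝐉(x_{k+1}, U_s(x_{k+1})) − α⊤𝐉(x_k, U_*) ≤ −Σ_{i=0}^m αⁱ·Lⁱ(x_k, u*_k)`. -/
theorem stmt_7 {nx nu m : ℕ}
    (f : EuclideanSpace ℝ (Fin nx) → EuclideanSpace ℝ (Fin nu) → EuclideanSpace ℝ (Fin nx))
    (hf : Continuous fun q : EuclideanSpace ℝ (Fin nx) × EuclideanSpace ℝ (Fin nu) =>
      f q.1 q.2)
    (Xs : Set (EuclideanSpace ℝ (Fin nx))) (hXc : IsCompact Xs)
    (Us : Set (EuclideanSpace ℝ (Fin nu))) (hUc : IsCompact Us)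
    (p : Fin (m + 1) → EuclideanSpace ℝ (Fin nx)) (hp0 : p 0 = 0)
    (L : Fin (m + 1) → EuclideanSpace ℝ (Fin nx) → EuclideanSpace ℝ (Fin nu) → ℝ)
    (F : Fin (m + 1) → EuclideanSpace ℝ (Fin nx) → ℝ)
    -- Assumption 1
    (hLc : ∀ i, Continuous fun q :
      EuclideanSpace ℝ (Fin nx) × EuclideanSpace ℝ (Fin nu) => L i q.1 q.2)
    (hFc : ∀ i, Continuous (F i))
    (hLp : ∀ i, L i (p i) 0 = 0) (hFp : ∀ i, F i (p i) = 0)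
    (σ1 σ2 : ℝ → ℝ) (hσ1 : ClassK σ1) (hσ2 : ClassK σ2)
    (hL_lb : ∀ i, ∀ x ∈ Xs, ∀ u ∈ Us, σ1 ‖x - p i‖ ≤ L i x u)
    (hF_lb : ∀ i, ∀ x ∈ Xs, σ1 ‖x - p i‖ ≤ F i x)
    (hF_ub : ∀ i, ∀ x ∈ Xs, F i x ≤ σ2 ‖x - p i‖)
    -- Assumption 2 (global form)
    (hA2 : ∀ δ' > (0 : ℝ), Metric.ball (0 : EuclideanSpace ℝ (Fin nx)) δ' ⊆ Xs →
      ∃ K' : Matrix (Fin nu) (Fin nx) ℝ, ∀ x ∈ Xs \ Metric.ball 0 δ',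
        L 0 x (matVec K' x) + F 0 (f x (matVec K' x)) - F 0 x < 0)
    -- P = min-max constant, attained at û, with P > 0
    (P : ℝ) (uhat : EuclideanSpace ℝ (Fin nu))
    (hP : IsLeast {y : ℝ | ∃ u ∈ Us, IsGreatest
        ((fun q : Fin (m + 1) × EuclideanSpace ℝ (Fin nx) =>
            L q.1 q.2 u + F q.1 (f q.2 u) - F q.1 q.2) ''
          ((Set.univ : Set (Fin (m + 1))) ×ˢ Xs)) y} P)
    (huhat : uhat ∈ Us ∧ IsGreatest
        ((fun q : Fin (m + 1) × EuclideanSpace ℝ (Fin nx) =>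
            L q.1 q.2 uhat + F q.1 (f q.2 uhat) - F q.1 q.2) ''
          ((Set.univ : Set (Fin (m + 1))) ×ˢ Xs)) P)
    (hPpos : 0 < P)
    -- parameters δ, γ, μ and the matrix K satisfying Assumption 2 for δ
    (δ : ℝ) (hδ : 0 < δ) (γ : Fin m → ℝ) (hγ : ∀ i, 0 < γ i) (μ : ℝ) (hμ : 0 < μ)
    (hball : Metric.ball (0 : EuclideanSpace ℝ (Fin nx)) δ ⊆ Xs)
    (K : Matrix (Fin nu) (Fin nx) ℝ)
    (hK : ∀ x ∈ Xs \ Metric.ball 0 δ,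
      L 0 x (matVec K x) + F 0 (f x (matVec K x)) - F 0 x < 0)
    -- β = min of the primary baseline weight over 𝕏∖B_δ, β > 0, and the key inequality
    (β : ℝ)
    (hβ : IsLeast ((fun x => baseWeight γ μ p x 0) '' (Xs \ Metric.ball 0 δ)) β)
    (hβpos : 0 < β)
    (hkey : ∀ x ∈ Xs \ Metric.ball 0 δ,
      β * (L 0 x (matVec K x) + F 0 (f x (matVec K x)) - F 0 x) ≤ -(1 - β) * P)
    -- horizon, current state, and the optimizer U_*
    (N : ℕ) (hN : 2 ≤ N)
    (xk : EuclideanSpace ℝ (Fin nx)) (hxk : xk ∈ Xs \ Metric.ball 0 δ)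
    (Up : ℕ → EuclideanSpace ℝ (Fin nu))
    (Ua : Fin m → ℕ → ℕ → EuclideanSpace ℝ (Fin nu))
    (hopt : IsMinimizer f L F Xs Us N (baseWeight γ μ p xk) xk Up Ua)
    (hxkf : traj f xk Up N ∈ Xs \ Metric.ball 0 δ) :
    wcost f L F N (baseWeight γ μ p xk) (f xk (Up 0))
        (shiftP N Up (matVec K (traj f xk Up N))) (shiftA N Ua uhat)
      - wcost f L F N (baseWeight γ μ p xk) xk Up Ua
      ≤ -∑ i : Fin (m + 1), baseWeight γ μ p xk i * L i xk (Up 0) :=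
  stmt_7_general f Xs Us p L F P uhat huhat hPpos δ γ hγ μ K hK β hβ hkey N hN xk hxk Up Ua hopt
    hxkf
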